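/- arXiv:2209.07450 — 5 statements merged into one kernel-verified Lean document; each statement's English description precedes it below -/
import Mathlib

section
/- For all constants k, k₁, k₂ > 0 and all real numbers u₁, u₂, v₁, v₂ ≥ 0, the Langmuir reaction rate satisfies the Lipschitz estimate |R(u₁,v₁) − R(u₂,v₂)| ≤ (k·k₁/4)·|u₁ − u₂| + (k·k₂/4)·|v₁ − v₂|; in particular R is Lipschitz continuous on the quadrant [0,∞)². -/
/-!
On the closed quadrant the rate is `k · f(k₁u, k₂v)` with `f(a, b) = ab/(1 + a + b)²`, so it
suffices to show that `f` is `1/4`-Lipschitz in each variable on `[0, ∞)²`; as `f` is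
symmetric, one variable is enough. Clearing denominators,
`f(a, b) - f(a', b) = (a - a') · b((1 + b)² - aa') / ((1 + a + b)²(1 + a' + b)²)`,
and the factor `b((1 + b)² - aa')` is bounded in absolute value by a quarter of the
denominator using only `(1 + b)² ≥ 4b` and `(1 + a + b)² ≥ 4(1 + b)a`.
-/

/-- The Langmuir reaction rate `R : ℝ² → ℝ`, defined by
`R(u,v) = k·k₁u·k₂v/(1 + k₁u + k₂v)²` if `u ≥ 0` and `v ≥ 0`, and `0` otherwise. -/
noncomputable def langmuirRate (k k₁ k₂ : ℝ) (u v : ℝ) : ℝ :=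
  if 0 ≤ u ∧ 0 ≤ v then k * (k₁ * u) * (k₂ * v) / (1 + k₁ * u + k₂ * v) ^ 2 else 0

noncomputable def langmuirKernel (a b : ℝ) : ℝ := a * b / (1 + a + b) ^ 2

lemma langmuirKernel_comm (a b : ℝ) : langmuirKernel a b = langmuirKernel b a := by
  unfold langmuirKernel; ring_nf

lemma langmuirKernel_sub_langmuirKernel_left (a a' b : ℝ) (ha : 0 ≤ a) (ha' : 0 ≤ a')
    (hb : 0 ≤ b) :
    langmuirKernel a b - langmuirKernel a' b =
      (a - a') * (b * ((1 + b) ^ 2 - a * a')) / ((1 + a + b) ^ 2 * (1 + a' + b) ^ 2) := by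
  have : (1 + a + b) ^ 2 ≠ 0 := by positivity
  have : (1 + a' + b) ^ 2 ≠ 0 := by positivity
  unfold langmuirKernel
  field_simp
  ring

lemma abs_langmuirKernel_numerator_le (a a' b : ℝ) (ha : 0 ≤ a) (ha' : 0 ≤ a') (hb : 0 ≤ b) :
    |b * ((1 + b) ^ 2 - a * a')| ≤ (1 + a + b) ^ 2 * (1 + a' + b) ^ 2 / 4 := by
  have hc : 4 * b ≤ (1 + b) ^ 2 := by nlinarith [sq_nonneg (1 - b)]
  have hca : 4 * (1 + b) * a ≤ (1 + a + b) ^ 2 := by nlinarith [sq_nonneg (1 + b - a)]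
  have hca' : 4 * (1 + b) * a' ≤ (1 + a' + b) ^ 2 := by nlinarith [sq_nonneg (1 + b - a')]
  have hc4 : (1 + b) ^ 4 ≤ (1 + a + b) ^ 2 * (1 + a' + b) ^ 2 := by
    rw [show (1 + b) ^ 4 = (1 + b) ^ 2 * (1 + b) ^ 2 by ring]
    gcongr <;> linarith
  have hprod : 16 * (1 + b) ^ 2 * (a * a') ≤ (1 + a + b) ^ 2 * (1 + a' + b) ^ 2 := by
    calc 16 * (1 + b) ^ 2 * (a * a') = (4 * (1 + b) * a) * (4 * (1 + b) * a') := by ring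
      _ ≤ _ := by gcongr
  have haa' : 0 ≤ a * a' := mul_nonneg ha ha'
  rw [abs_le]
  constructor <;> nlinarith [mul_nonneg hb haa', mul_nonneg hb (sq_nonneg (1 + b))]

lemma abs_langmuirKernel_sub_left_le (a a' b : ℝ) (ha : 0 ≤ a) (ha' : 0 ≤ a') (hb : 0 ≤ b) :
    |langmuirKernel a b - langmuirKernel a' b| ≤ |a - a'| / 4 := by
  have hden : 0 < (1 + a + b) ^ 2 * (1 + a' + b) ^ 2 := by positivity
  rw [langmuirKernel_sub_langmuirKernel_left a a' b ha ha' hb, abs_div, abs_mul,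
    abs_of_pos hden, div_le_iff₀ hden]
  calc |a - a'| * |b * ((1 + b) ^ 2 - a * a')|
      ≤ |a - a'| * ((1 + a + b) ^ 2 * (1 + a' + b) ^ 2 / 4) := by
        gcongr; exact abs_langmuirKernel_numerator_le a a' b ha ha' hb
    _ = |a - a'| / 4 * ((1 + a + b) ^ 2 * (1 + a' + b) ^ 2) := by ring

lemma abs_langmuirKernel_sub_le (a a' b b' : ℝ) (ha : 0 ≤ a) (ha' : 0 ≤ a') (hb : 0 ≤ b)
    (hb' : 0 ≤ b') :
    |langmuirKernel a b - langmuirKernel a' b'| ≤ |a - a'| / 4 + |b - b'| / 4 := by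
  have hright : |langmuirKernel a' b - langmuirKernel a' b'| ≤ |b - b'| / 4 := by
    rw [langmuirKernel_comm a' b, langmuirKernel_comm a' b']
    exact abs_langmuirKernel_sub_left_le b b' a' hb hb' ha'
  calc |langmuirKernel a b - langmuirKernel a' b'|
      ≤ |langmuirKernel a b - langmuirKernel a' b| + |langmuirKernel a' b - langmuirKernel a' b'| :=
        abs_sub_le _ _ _
    _ ≤ |a - a'| / 4 + |b - b'| / 4 :=
        add_le_add (abs_langmuirKernel_sub_left_le a a' b ha ha' hb) hright

lemma langmuirRate_of_nonneg (k k₁ k₂ : ℝ) {u v : ℝ} (hu : 0 ≤ u) (hv : 0 ≤ v) :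
    langmuirRate k k₁ k₂ u v = k * langmuirKernel (k₁ * u) (k₂ * v) := by
  rw [langmuirRate, if_pos ⟨hu, hv⟩, langmuirKernel]
  ring

lemma abs_langmuirRate_sub_le {k k₁ k₂ : ℝ} (hk : 0 ≤ k) (hk₁ : 0 ≤ k₁) (hk₂ : 0 ≤ k₂)
    {u₁ u₂ v₁ v₂ : ℝ} (hu₁ : 0 ≤ u₁) (hu₂ : 0 ≤ u₂) (hv₁ : 0 ≤ v₁) (hv₂ : 0 ≤ v₂) :
    |langmuirRate k k₁ k₂ u₁ v₁ - langmuirRate k k₁ k₂ u₂ v₂| ≤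
      (k * k₁ / 4) * |u₁ - u₂| + (k * k₂ / 4) * |v₁ - v₂| := by
  rw [langmuirRate_of_nonneg k k₁ k₂ hu₁ hv₁, langmuirRate_of_nonneg k k₁ k₂ hu₂ hv₂, ← mul_sub,
    abs_mul, abs_of_nonneg hk]
  calc k * |langmuirKernel (k₁ * u₁) (k₂ * v₁) - langmuirKernel (k₁ * u₂) (k₂ * v₂)|
      ≤ k * (|k₁ * u₁ - k₁ * u₂| / 4 + |k₂ * v₁ - k₂ * v₂| / 4) := by
        gcongr
        exact abs_langmuirKernel_sub_le _ _ _ _ (by positivity) (by positivity) (by positivity)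
          (by positivity)
    _ = (k * k₁ / 4) * |u₁ - u₂| + (k * k₂ / 4) * |v₁ - v₂| := by
        rw [← mul_sub, ← mul_sub, abs_mul, abs_mul, abs_of_nonneg hk₁, abs_of_nonneg hk₂]
        ring

lemma lipschitzOnWith_langmuirRate {k k₁ k₂ : ℝ} (hk : 0 ≤ k) (hk₁ : 0 ≤ k₁) (hk₂ : 0 ≤ k₂) :
    LipschitzOnWith (k * k₁ / 4 + k * k₂ / 4).toNNReal
      (fun p : ℝ × ℝ => langmuirRate k k₁ k₂ p.1 p.2) (Set.Ici 0 ×ˢ Set.Ici 0) := by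
  refine LipschitzOnWith.of_dist_le_mul ?_
  rintro ⟨u₁, v₁⟩ ⟨hu₁, hv₁⟩ ⟨u₂, v₂⟩ ⟨hu₂, hv₂⟩
  rw [Real.coe_toNNReal _ (by positivity), Prod.dist_eq, Real.dist_eq, Real.dist_eq,
    Real.dist_eq]
  calc |langmuirRate k k₁ k₂ u₁ v₁ - langmuirRate k k₁ k₂ u₂ v₂|
      ≤ (k * k₁ / 4) * |u₁ - u₂| + (k * k₂ / 4) * |v₁ - v₂| :=
        abs_langmuirRate_sub_le hk hk₁ hk₂ hu₁ hu₂ hv₁ hv₂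
    _ ≤ (k * k₁ / 4) * max |u₁ - u₂| |v₁ - v₂| + (k * k₂ / 4) * max |u₁ - u₂| |v₁ - v₂| := by
        gcongr
        · exact le_max_left _ _
        · exact le_max_right _ _
    _ = (k * k₁ / 4 + k * k₂ / 4) * max |u₁ - u₂| |v₁ - v₂| := by ring

/-- For all constants `k, k₁, k₂ > 0` and all `u₁, u₂, v₁, v₂ ≥ 0`, the Langmuir
reaction rate satisfies the Lipschitz estimate
`|R(u₁,v₁) − R(u₂,v₂)| ≤ (k·k₁/4)·|u₁ − u₂| + (k·k₂/4)·|v₁ − v₂|`;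
in particular `R` is Lipschitz continuous on the quadrant `[0,∞)²`. -/
theorem langmuir_rate_lipschitz (k k₁ k₂ : ℝ) (hk : 0 < k) (hk₁ : 0 < k₁) (hk₂ : 0 < k₂)
    (u₁ u₂ v₁ v₂ : ℝ) (hu₁ : 0 ≤ u₁) (hu₂ : 0 ≤ u₂) (hv₁ : 0 ≤ v₁) (hv₂ : 0 ≤ v₂) :
    |langmuirRate k k₁ k₂ u₁ v₁ - langmuirRate k k₁ k₂ u₂ v₂| ≤
      (k * k₁ / 4) * |u₁ - u₂| + (k * k₂ / 4) * |v₁ - v₂| ∧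
    ∃ L : NNReal, LipschitzOnWith L (fun p : ℝ × ℝ => langmuirRate k k₁ k₂ p.1 p.2)
      (Set.Ici 0 ×ˢ Set.Ici 0) :=
  ⟨abs_langmuirRate_sub_le hk.le hk₁.le hk₂.le hu₁ hu₂ hv₁ hv₂,
    _, lipschitzOnWith_langmuirRate hk.le hk₁.le hk₂.le⟩
end

section
/- Let T > 0, δ > 0, k_d > 0, and let r : [0,T] → ℝ be continuous with r(t) ≥ 0 for all t. If w : [0,T] → ℝ is differentiable with w(0) = w₀ ≥ 0 and w'(t) = k_d·(r(t) − ψ_δ(w(t))) for all t ∈ [0,T], then w(t) ≥ 0 for all t ∈ [0,T]. -/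
/-!
Where `w < 0` the dissolution rate `ψ_δ(w)` vanishes, so `w' = k_d r ≥ 0` there. Hence `w`
cannot become negative: on the interval from the last time `w` was nonnegative up to a time where
it is negative, `w` would be nondecreasing.
-/

noncomputable def psiDelta (δ : ℝ) (w : ℝ) : ℝ :=
  if w ≤ 0 then 0 else if w < δ then w / δ else 1

open Set

theorem psiDelta_of_nonpos {δ w : ℝ} (hw : w ≤ 0) : psiDelta δ w = 0 := if_pos hw

theorem ContinuousOn.exists_nonneg_forall_Ioo_neg {f : ℝ → ℝ} {a b : ℝ} (hab : a ≤ b)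
    (hf : ContinuousOn f (Icc a b)) (ha : 0 ≤ f a) (hb : f b < 0) :
    ∃ c ∈ Ico a b, 0 ≤ f c ∧ ∀ x ∈ Ioo c b, f x < 0 := by
  set S := Icc a b ∩ f ⁻¹' Ici 0
  have hS_closed : IsClosed S := hf.preimage_isClosed_of_isClosed isClosed_Icc isClosed_Ici
  have hS_bdd : BddAbove S := bddAbove_Icc.mono inter_subset_left
  have hc : sSup S ∈ S := hS_closed.csSup_mem ⟨a, ⟨left_mem_Icc.mpr hab, ha⟩⟩ hS_bdd
  have hcb : sSup S ≠ b := fun h => (h ▸ hb).not_ge hc.2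
  refine ⟨sSup S, ⟨hc.1.1, hc.1.2.lt_of_ne hcb⟩, hc.2, fun x hx => ?_⟩
  by_contra! hfx
  exact (le_csSup hS_bdd ⟨⟨hc.1.1.trans hx.1.le, hx.2.le⟩, hfx⟩).not_gt hx.1

theorem nonneg_of_hasDerivAt_nonneg_of_neg {f f' : ℝ → ℝ} {a b : ℝ}
    (hf : ContinuousOn f (Icc a b)) (hf' : ∀ x ∈ Ioo a b, HasDerivAt f (f' x) x)
    (hf'_nonneg : ∀ x ∈ Ioo a b, f x < 0 → 0 ≤ f' x) (ha : 0 ≤ f a) :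
    ∀ x ∈ Icc a b, 0 ≤ f x := by
  intro t ht
  by_contra! hft
  obtain ⟨c, hc, hfc, hneg⟩ :=
    (hf.mono (Icc_subset_Icc_right ht.2)).exists_nonneg_forall_Ioo_neg ht.1 ha hft
  have hsub : Ioo c t ⊆ Ioo a b := Ioo_subset_Ioo hc.1 ht.2
  have hmono : MonotoneOn f (Icc c t) := by
    refine monotoneOn_of_hasDerivWithinAt_nonneg (convex_Icc c t)
      (hf.mono (Icc_subset_Icc hc.1 ht.2)) (f' := f') (fun x hx => ?_) (fun x hx => ?_)
    · rw [interior_Icc] at hx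
      exact (hf' x (hsub hx)).hasDerivWithinAt
    · rw [interior_Icc] at hx
      exact hf'_nonneg x (hsub hx) (hneg x hx)
  linarith [hmono (left_mem_Icc.mpr hc.2.le) (right_mem_Icc.mpr hc.2.le) hc.2.le]

theorem regularized_ode_nonneg_general (T δ kd w₀ : ℝ) (hkd : 0 < kd)
    (r w : ℝ → ℝ)
    (hrpos : ∀ t ∈ Set.Icc (0 : ℝ) T, 0 ≤ r t)
    (hw0 : w 0 = w₀) (hw₀pos : 0 ≤ w₀)
    (hw : ∀ t ∈ Set.Icc (0 : ℝ) T,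
      HasDerivWithinAt w (kd * (r t - psiDelta δ (w t))) (Set.Icc 0 T) t) :
    ∀ t ∈ Set.Icc (0 : ℝ) T, 0 ≤ w t := by
  refine nonneg_of_hasDerivAt_nonneg_of_neg (fun t ht => (hw t ht).continuousWithinAt)
    (fun t ht => (hw t (Ioo_subset_Icc_self ht)).hasDerivAt (Icc_mem_nhds ht.1 ht.2))
    (fun t ht hwt => ?_) (hw0 ▸ hw₀pos)
  rw [psiDelta_of_nonpos hwt.le, sub_zero]
  exact mul_nonneg hkd.le (hrpos t (Ioo_subset_Icc_self ht))

/-- Let `T > 0`, `δ > 0`, `k_d > 0`, and let `r : [0,T] → ℝ` be continuous with `r ≥ 0`.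
If `w` is differentiable on `[0,T]` with `w(0) = w₀ ≥ 0` and
`w'(t) = k_d·(r(t) − ψ_δ(w(t)))`, then `w(t) ≥ 0` for all `t ∈ [0,T]`. -/
theorem regularized_ode_nonneg (T δ kd w₀ : ℝ) (hT : 0 < T) (hδ : 0 < δ) (hkd : 0 < kd)
    (r w : ℝ → ℝ) (hr : ContinuousOn r (Set.Icc 0 T))
    (hrpos : ∀ t ∈ Set.Icc (0 : ℝ) T, 0 ≤ r t)
    (hw0 : w 0 = w₀) (hw₀pos : 0 ≤ w₀)
    (hw : ∀ t ∈ Set.Icc (0 : ℝ) T,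
      HasDerivWithinAt w (kd * (r t - psiDelta δ (w t))) (Set.Icc 0 T) t) :
    ∀ t ∈ Set.Icc (0 : ℝ) T, 0 ≤ w t :=
  regularized_ode_nonneg_general T δ kd w₀ hkd r w hrpos hw0 hw₀pos hw
end

section
/- Solutions of the multivalued precipitation–dissolution ODE are unique: let T > 0, k_d > 0, and r : [0,T] → ℝ. Suppose that for i = 1, 2 the function w_i : [0,T] → ℝ is differentiable, z_i : [0,T] → ℝ satisfies z_i(t) ∈ ψ(w_i(t)) for all t ∈ [0,T], and w_i'(t) = k_d·(r(t) − z_i(t)) for all t ∈ [0,T]. If w₁(0) = w₂(0), then w₁(t) = w₂(t) for all t ∈ [0,T]. -/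
/-!
Since `ψ` is a monotone graph, two solutions satisfy
`(w₁ - w₂)(w₁' - w₂') = -k_d (w₁ - w₂)(z₁ - z₂) ≤ 0`. Hence `(w₁ - w₂)²` is antitone on `[0,T]`
and stays at its initial value `0`.
-/

open Set

def psiGraph (w : ℝ) : Set ℝ :=
  {z : ℝ | 0 ≤ z ∧ z ≤ 1 ∧ (w < 0 → z = 0) ∧ (0 < w → z = 1)}

lemma sub_mul_sub_nonneg_of_mem_psiGraph {a b x y : ℝ} (hx : x ∈ psiGraph a)
    (hy : y ∈ psiGraph b) : 0 ≤ (a - b) * (x - y) := by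
  obtain ⟨hx0, hx1, hxn, hxp⟩ := hx
  obtain ⟨hy0, hy1, hyn, hyp⟩ := hy
  rcases lt_trichotomy a b with h | rfl | h
  · rcases lt_trichotomy a 0 with ha | ha | ha
    · rw [hxn ha]; nlinarith
    · have := hyp (by linarith); nlinarith
    · have := hxp ha; have := hyp (by linarith); nlinarith
  · simp
  · rcases lt_trichotomy b 0 with hb | hb | hb
    · rw [hyn hb]; nlinarith
    · have := hxp (by linarith); nlinarith
    · have := hyp hb; have := hxp (by linarith); nlinarith

theorem eqOn_Icc_of_inner_sub_deriv_nonpos {F : Type*} [NormedAddCommGroup F]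
    [InnerProductSpace ℝ F] {a b : ℝ} {u v u' v' : ℝ → F}
    (hu : ∀ t ∈ Icc a b, HasDerivWithinAt u (u' t) (Icc a b) t)
    (hv : ∀ t ∈ Icc a b, HasDerivWithinAt v (v' t) (Icc a b) t)
    (hdiss : ∀ t ∈ Ioo a b, inner ℝ (u t - v t) (u' t - v' t) ≤ 0) (ha : u a = v a) :
    EqOn u v (Icc a b) := by
  have hderiv : ∀ t ∈ Icc a b, HasDerivWithinAt (fun s ↦ ‖u s - v s‖ ^ 2)
      (2 * inner ℝ (u t - v t) (u' t - v' t)) (Icc a b) t :=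
    fun t ht ↦ ((hu t ht).sub (hv t ht)).norm_sq
  have hanti : AntitoneOn (fun s ↦ ‖u s - v s‖ ^ 2) (Icc a b) := by
    refine antitoneOn_of_hasDerivWithinAt_nonpos
      (f' := fun t ↦ 2 * inner ℝ (u t - v t) (u' t - v' t)) (convex_Icc a b)
      (fun t ht ↦ (hderiv t ht).continuousWithinAt) (fun t ht ↦ ?_) (fun t ht ↦ ?_)
    · rw [interior_Icc] at ht ⊢
      exact (hderiv t (Ioo_subset_Icc_self ht)).mono Ioo_subset_Icc_self
    · rw [interior_Icc] at ht
      linarith [hdiss t ht]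
  intro t ht
  have hle : ‖u t - v t‖ ^ 2 ≤ ‖u a - v a‖ ^ 2 :=
    hanti (left_mem_Icc.2 (ht.1.trans ht.2)) ht ht.1
  simpa [ha, sub_eq_zero] using hle

theorem multivalued_ode_uniqueness_general (T kd : ℝ) (hkd : 0 < kd)
    (r w₁ w₂ z₁ z₂ : ℝ → ℝ)
    (hz₁ : ∀ t ∈ Set.Icc (0 : ℝ) T, z₁ t ∈ psiGraph (w₁ t))
    (hz₂ : ∀ t ∈ Set.Icc (0 : ℝ) T, z₂ t ∈ psiGraph (w₂ t))
    (hw₁ : ∀ t ∈ Set.Icc (0 : ℝ) T,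
      HasDerivWithinAt w₁ (kd * (r t - z₁ t)) (Set.Icc 0 T) t)
    (hw₂ : ∀ t ∈ Set.Icc (0 : ℝ) T,
      HasDerivWithinAt w₂ (kd * (r t - z₂ t)) (Set.Icc 0 T) t)
    (h0 : w₁ 0 = w₂ 0) :
    ∀ t ∈ Set.Icc (0 : ℝ) T, w₁ t = w₂ t := by
  refine eqOn_Icc_of_inner_sub_deriv_nonpos hw₁ hw₂ (fun t ht ↦ ?_) h0
  have hmono := sub_mul_sub_nonneg_of_mem_psiGraph (hz₁ t (Ioo_subset_Icc_self ht))
    (hz₂ t (Ioo_subset_Icc_self ht))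
  have hinner : inner ℝ (w₁ t - w₂ t) (kd * (r t - z₁ t) - kd * (r t - z₂ t))
      = -kd * ((w₁ t - w₂ t) * (z₁ t - z₂ t)) := by
    rw [Real.inner_apply]
    ring
  rw [hinner]
  exact mul_nonpos_of_nonpos_of_nonneg (neg_nonpos.mpr hkd.le) hmono

/-- Uniqueness for the multivalued precipitation–dissolution ODE: if for `i = 1,2`,
`w_i` is differentiable on `[0,T]`, `z_i(t) ∈ ψ(w_i(t))` and
`w_i'(t) = k_d·(r(t) − z_i(t))` on `[0,T]`, and `w₁(0) = w₂(0)`, then `w₁ = w₂` on `[0,T]`. -/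
theorem multivalued_ode_uniqueness (T kd : ℝ) (hT : 0 < T) (hkd : 0 < kd)
    (r w₁ w₂ z₁ z₂ : ℝ → ℝ)
    (hz₁ : ∀ t ∈ Set.Icc (0 : ℝ) T, z₁ t ∈ psiGraph (w₁ t))
    (hz₂ : ∀ t ∈ Set.Icc (0 : ℝ) T, z₂ t ∈ psiGraph (w₂ t))
    (hw₁ : ∀ t ∈ Set.Icc (0 : ℝ) T,
      HasDerivWithinAt w₁ (kd * (r t - z₁ t)) (Set.Icc 0 T) t)
    (hw₂ : ∀ t ∈ Set.Icc (0 : ℝ) T,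
      HasDerivWithinAt w₂ (kd * (r t - z₂ t)) (Set.Icc 0 T) t)
    (h0 : w₁ 0 = w₂ 0) :
    ∀ t ∈ Set.Icc (0 : ℝ) T, w₁ t = w₂ t :=
  multivalued_ode_uniqueness_general T kd hkd r w₁ w₂ z₁ z₂ hz₁ hz₂ hw₁ hw₂ h0
end

section
/- Stability of the regularized precipitation–dissolution ODE: let T > 0, δ > 0, k_d > 0, let r₁, r₂ : [0,T] → ℝ be continuous, and for i = 1, 2 let w_i : [0,T] → ℝ be differentiable with w_i'(t) = k_d·(r_i(t) − ψ_δ(w_i(t))) for all t ∈ [0,T]. Then for every t ∈ [0,T], |w₁(t) − w₂(t)| ≤ (|w₁(0) − w₂(0)| + k_d·∫₀ᵗ |r₁(s) − r₂(s)| ds)·exp(k_d·t/δ). -/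
open Set Real Filter Topology

theorem psiDelta_eq_max_min {δ : ℝ} (hδ : 0 < δ) (w : ℝ) :
    psiDelta δ w = max (min (w / δ) 1) 0 := by
  unfold psiDelta
  split_ifs with hw₀ hwδ
  · exact (max_eq_right (min_le_of_left_le (div_nonpos_of_nonpos_of_nonneg hw₀ hδ.le))).symm
  · rw [min_eq_left ((div_le_one hδ).2 hwδ.le), max_eq_left (div_pos (not_le.1 hw₀) hδ).le]
  · rw [min_eq_right ((one_le_div hδ).2 (not_lt.1 hwδ)), max_eq_left zero_le_one]

theorem abs_psiDelta_sub_le {δ : ℝ} (hδ : 0 < δ) (v w : ℝ) :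
    |psiDelta δ v - psiDelta δ w| ≤ |v - w| / δ := by
  rw [psiDelta_eq_max_min hδ, psiDelta_eq_max_min hδ]
  calc |max (min (v / δ) 1) 0 - max (min (w / δ) 1) 0|
      ≤ |min (v / δ) 1 - min (w / δ) 1| := abs_max_sub_max_le_abs _ _ _
    _ ≤ max |v / δ - w / δ| |(1 : ℝ) - 1| := abs_min_sub_min_le_max _ _ _ _
    _ = |v - w| / δ := by
      rw [sub_self, abs_zero, max_eq_left (abs_nonneg _), ← sub_div, abs_div, abs_of_pos hδ]

theorem abs_rate_sub_rate_le {δ kd : ℝ} (hδ : 0 < δ) (hkd : 0 ≤ kd) (r₁ r₂ w₁ w₂ : ℝ) :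
    |kd * (r₁ - psiDelta δ w₁) - kd * (r₂ - psiDelta δ w₂)|
      ≤ kd * |r₁ - r₂| + kd / δ * |w₁ - w₂| := by
  calc |kd * (r₁ - psiDelta δ w₁) - kd * (r₂ - psiDelta δ w₂)|
      = kd * |(r₁ - r₂) - (psiDelta δ w₁ - psiDelta δ w₂)| := by
        rw [← mul_sub, abs_mul, abs_of_nonneg hkd]; ring_nf
    _ ≤ kd * (|r₁ - r₂| + |w₁ - w₂| / δ) := by
        gcongr
        exact (abs_sub _ _).trans (add_le_add_right (abs_psiDelta_sub_le hδ w₁ w₂) _)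
    _ = kd * |r₁ - r₂| + kd / δ * |w₁ - w₂| := by ring

section Gronwall

variable {E : Type*} [NormedAddCommGroup E] [NormedSpace ℝ E] {f f' : ℝ → E} {g : ℝ → ℝ}
  {K a b : ℝ}

theorem norm_le_integral_add_mul_exp_of_norm_deriv_right_le (hf : ContinuousOn f (Icc a b))
    (hf' : ∀ x ∈ Ico a b, HasDerivWithinAt f (f' x) (Ici x) x) (hg : Continuous g)
    (hg₀ : ∀ x ∈ Ico a b, 0 ≤ g x) (hK : 0 ≤ K)
    (bound : ∀ x ∈ Ico a b, ‖f' x‖ ≤ g x + K * ‖f x‖) {ε : ℝ} (hε : 0 < ε) :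
    ∀ x ∈ Icc a b,
      ‖f x‖ ≤ (‖f a‖ + (∫ s in a..x, g s) + ε * (1 + (x - a))) * exp (K * (x - a)) := by
  set B : ℝ → ℝ := fun x => (‖f a‖ + (∫ s in a..x, g s) + ε * (1 + (x - a))) * exp (K * (x - a))
  have hB : ∀ x, HasDerivAt B ((g x + ε) * exp (K * (x - a)) + K * B x) x := by
    intro x
    have hI := (hg.integral_hasStrictDerivAt a x).hasDerivAt
    have hlin : HasDerivAt (fun x => ε * (1 + (x - a))) ε x := by
      simpa using (((hasDerivAt_id x).sub_const a).const_add 1).const_mul ε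
    have hexp : HasDerivAt (fun x => exp (K * (x - a))) (exp (K * (x - a)) * K) x := by
      simpa using (((hasDerivAt_id x).sub_const a).const_mul K).exp
    exact (((hI.const_add ‖f a‖).add hlin).mul hexp).congr_deriv
      (by simp only [B, Pi.add_apply]; ring)
  refine image_norm_le_of_norm_deriv_right_lt_deriv_boundary hf hf' ?_ hB ?_
  · simp [hε.le]
  · intro x hx hfx
    have hexp : 1 ≤ exp (K * (x - a)) := one_le_exp (mul_nonneg hK (sub_nonneg.2 hx.1))
    calc ‖f' x‖ ≤ g x + K * B x := (bound x hx).trans_eq (by rw [hfx])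
      _ < (g x + ε) * exp (K * (x - a)) + K * B x := by nlinarith [hg₀ x hx]

theorem norm_le_integral_mul_exp_of_norm_deriv_right_le (hf : ContinuousOn f (Icc a b))
    (hf' : ∀ x ∈ Ico a b, HasDerivWithinAt f (f' x) (Ici x) x) (hg : ContinuousOn g (Icc a b))
    (hg₀ : ∀ x ∈ Ico a b, 0 ≤ g x) (hK : 0 ≤ K)
    (bound : ∀ x ∈ Ico a b, ‖f' x‖ ≤ g x + K * ‖f x‖) :
    ∀ x ∈ Icc a b, ‖f x‖ ≤ (‖f a‖ + ∫ s in a..x, g s) * exp (K * (x - a)) := by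
  intro x hx
  have hab : a ≤ b := hx.1.trans hx.2
  -- extend `g` continuously to `ℝ` so that the primitive is differentiable everywhere
  set G : ℝ → ℝ := fun s => g (projIcc a b hab s)
  have hG_eq : ∀ s ∈ Icc a b, G s = g s := fun s hs => by simp [G, projIcc_of_mem hab hs]
  have hG_int : ∫ s in a..x, G s = ∫ s in a..x, g s := by
    refine intervalIntegral.integral_congr fun s hs => hG_eq s ?_
    rw [uIcc_of_le hx.1] at hs
    exact ⟨hs.1, hs.2.trans hx.2⟩
  have hε : ∀ ε > 0,
      ‖f x‖ ≤ (‖f a‖ + (∫ s in a..x, g s) + ε * (1 + (x - a))) * exp (K * (x - a)) := by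
    intro ε hε
    rw [← hG_int]
    refine norm_le_integral_add_mul_exp_of_norm_deriv_right_le (g := G) hf hf'
      (hg.comp_continuous (continuous_subtype_val.comp continuous_projIcc)
        fun s => (projIcc a b hab s).2)
      (fun s hs => by rw [hG_eq s (Ico_subset_Icc_self hs)]; exact hg₀ s hs) hK
      (fun s hs => by rw [hG_eq s (Ico_subset_Icc_self hs)]; exact bound s hs) hε x hx
  refine ge_of_tendsto (x := 𝓝[>] (0 : ℝ)) ?_ (eventually_nhdsWithin_of_forall hε)
  refine (Continuous.tendsto' ?_ 0 _ (by simp)).mono_left nhdsWithin_le_nhds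
  fun_prop

end Gronwall

theorem regularized_ode_stability_general (T δ kd : ℝ) (hδ : 0 < δ) (hkd : 0 < kd)
    (r₁ r₂ w₁ w₂ : ℝ → ℝ)
    (hr₁ : ContinuousOn r₁ (Set.Icc 0 T)) (hr₂ : ContinuousOn r₂ (Set.Icc 0 T))
    (hw₁ : ∀ t ∈ Set.Icc (0 : ℝ) T,
      HasDerivWithinAt w₁ (kd * (r₁ t - psiDelta δ (w₁ t))) (Set.Icc 0 T) t)
    (hw₂ : ∀ t ∈ Set.Icc (0 : ℝ) T,
      HasDerivWithinAt w₂ (kd * (r₂ t - psiDelta δ (w₂ t))) (Set.Icc 0 T) t) :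
    ∀ t ∈ Set.Icc (0 : ℝ) T,
      |w₁ t - w₂ t| ≤
        (|w₁ 0 - w₂ 0| + kd * ∫ s in (0 : ℝ)..t, |r₁ s - r₂ s|) * Real.exp (kd * t / δ) := by
  have hw : ∀ t ∈ Icc (0 : ℝ) T, HasDerivWithinAt (fun t => w₁ t - w₂ t)
      (kd * (r₁ t - psiDelta δ (w₁ t)) - kd * (r₂ t - psiDelta δ (w₂ t))) (Icc 0 T) t :=
    fun t ht => (hw₁ t ht).sub (hw₂ t ht)
  intro t ht
  have hbound := norm_le_integral_mul_exp_of_norm_deriv_right_le (K := kd / δ)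
    (fun t ht => (hw t ht).continuousWithinAt)
    (fun t ht => (hw t (Ico_subset_Icc_self ht)).mono_of_mem_nhdsWithin
      (Icc_mem_nhdsGE_of_mem ht))
    (continuousOn_const.mul (hr₁.sub hr₂).abs)
    (fun t _ => mul_nonneg hkd.le (abs_nonneg _)) (div_pos hkd hδ).le
    (fun t _ => abs_rate_sub_rate_le hδ hkd.le _ _ _ _) t ht
  simpa [intervalIntegral.integral_const_mul, mul_div_right_comm] using hbound

/-- Stability of the regularized precipitation–dissolution ODE: if `r₁, r₂` are continuous
on `[0,T]` and `w_i'(t) = k_d·(r_i(t) − ψ_δ(w_i(t)))` on `[0,T]` for `i = 1,2`, then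
`|w₁(t) − w₂(t)| ≤ (|w₁(0) − w₂(0)| + k_d·∫₀ᵗ |r₁ − r₂|)·exp(k_d·t/δ)` on `[0,T]`. -/
theorem regularized_ode_stability (T δ kd : ℝ) (hT : 0 < T) (hδ : 0 < δ) (hkd : 0 < kd)
    (r₁ r₂ w₁ w₂ : ℝ → ℝ)
    (hr₁ : ContinuousOn r₁ (Set.Icc 0 T)) (hr₂ : ContinuousOn r₂ (Set.Icc 0 T))
    (hw₁ : ∀ t ∈ Set.Icc (0 : ℝ) T,
      HasDerivWithinAt w₁ (kd * (r₁ t - psiDelta δ (w₁ t))) (Set.Icc 0 T) t)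
    (hw₂ : ∀ t ∈ Set.Icc (0 : ℝ) T,
      HasDerivWithinAt w₂ (kd * (r₂ t - psiDelta δ (w₂ t))) (Set.Icc 0 T) t) :
    ∀ t ∈ Set.Icc (0 : ℝ) T,
      |w₁ t - w₂ t| ≤
        (|w₁ 0 - w₂ 0| + kd * ∫ s in (0 : ℝ)..t, |r₁ s - r₂ s|) * Real.exp (kd * t / δ) :=
  regularized_ode_stability_general T δ kd hδ hkd r₁ r₂ w₁ w₂ hr₁ hr₂ hw₁ hw₂
end

section
/- Existence of a nonnegative solution of the multivalued precipitation–dissolution ODE: let T > 0, k > 0, k_d > 0, let w₀ ≥ 0, and let r : [0,T] → ℝ be continuous with 0 ≤ r(t) ≤ k/4 for all t. Then there exist a Lipschitz function w : [0,T] → ℝ with Lipschitz constant k_d·(1 + k/4) and a measurable function z : [0,T] → ℝ such that w(0) = w₀, w(t) ≥ 0 for all t ∈ [0,T], and for almost every t ∈ (0,T): z(t) ∈ ψ(w(t)) and w is differentiable at t with w'(t) = k_d·(r(t) − z(t)). -/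
/-!
With the dissolution saturated (`z = 1`) the state would follow the free trajectory
`F t = w₀ + ∫₀ᵗ k_d (r - 1)`, which may become negative. The solution is its Skorokhod reflection
at `0`: `w = F + ℓ` with `ℓ t = max 0 (-min_{[0,t]} F)`, the least nondecreasing correction keeping
`w ≥ 0`. Since `ℓ` only increases at zeros of `w`, on `{w > 0}` it is locally constant and
`w' = F' = k_d (r - 1)`, i.e. `z = 1`. At a differentiability point with `w = 0`, `w` is minimal, so
`w' = 0`, and `F` attains its running minimum, so `F' ≤ 0`, i.e. `r ≤ 1`: then `z = r ∈ ψ(0)`.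
If `ℓ` grows on `[a, b]`, then `w` vanishes at some `u ∈ (a, b]` with `ℓ u = ℓ b`, so
`w b - w a ≤ F b - F u`: hence `w` is Lipschitz with the constant of `F`, and Rademacher's theorem
gives differentiability almost everywhere.
-/

open MeasureTheory

open Set Filter Topology

noncomputable section

/-- Taking the infimum over `[0, max 0 t]` makes `runningMin F` constant on `t ≤ 0`, hence antitone
on all of `ℝ`. -/
def runningMin (F : ℝ → ℝ) (t : ℝ) : ℝ := sInf (F '' Icc 0 (max 0 t))

def skorokhodRegulator (F : ℝ → ℝ) (t : ℝ) : ℝ := max 0 (-runningMin F t)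

def skorokhodReflection (F : ℝ → ℝ) (t : ℝ) : ℝ := F t + skorokhodRegulator F t

end

theorem HasDerivAt.nonpos_of_isMinOn_Icc {F : ℝ → ℝ} {a t d : ℝ} (hd : HasDerivAt F d t)
    (hat : a < t) (hmin : IsMinOn F (Icc a t) t) : d ≤ 0 := by
  have hcone : a - t ∈ posTangentConeAt (Icc a t) t :=
    mem_posTangentConeAt_of_segment_subset (by
      rw [add_sub_cancel, segment_symm, segment_eq_Icc hat.le])
  have := hmin.localize.hasFDerivWithinAt_nonneg hd.hasFDerivAt.hasFDerivWithinAt hcone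
  rw [ContinuousLinearMap.toSpanSingleton_apply, smul_eq_mul] at this
  exact nonpos_of_mul_nonneg_right this (sub_neg.2 hat)

section Skorokhod

variable {F : ℝ → ℝ} {s t u : ℝ}

theorem runningMin_le (hF : Continuous F) (hu : 0 ≤ u) (hut : u ≤ t) : runningMin F t ≤ F u :=
  csInf_le (isCompact_Icc.image hF).bddBelow ⟨u, ⟨hu, hut.trans (le_max_right 0 t)⟩, rfl⟩

theorem exists_eq_runningMin (hF : Continuous F) (t : ℝ) :
    ∃ u ∈ Icc 0 (max 0 t), F u = runningMin F t :=
  (isCompact_Icc.image hF).sInf_mem ((nonempty_Icc.2 (le_max_left 0 t)).image F)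

theorem runningMin_antitone (hF : Continuous F) : Antitone (runningMin F) := fun s _ hst =>
  csInf_le_csInf (isCompact_Icc.image hF).bddBelow ((nonempty_Icc.2 (le_max_left 0 s)).image F)
    (image_mono (Icc_subset_Icc_right (max_le_max le_rfl hst)))

theorem skorokhodRegulator_monotone (hF : Continuous F) : Monotone (skorokhodRegulator F) :=
  fun _ _ hst => max_le_max le_rfl (neg_le_neg (runningMin_antitone hF hst))

theorem measurable_skorokhodReflection (hF : Continuous F) :
    Measurable (skorokhodReflection F) :=
  hF.measurable.add (skorokhodRegulator_monotone hF).measurable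

theorem skorokhodReflection_zero (h0 : 0 ≤ F 0) : skorokhodReflection F 0 = F 0 := by
  simp [skorokhodReflection, skorokhodRegulator, runningMin, h0]

theorem skorokhodRegulator_nonneg : 0 ≤ skorokhodRegulator F t := le_max_left _ _

theorem neg_runningMin_le_skorokhodRegulator : -runningMin F t ≤ skorokhodRegulator F t :=
  le_max_right _ _

theorem skorokhodReflection_nonneg (hF : Continuous F) (ht : 0 ≤ t) :
    0 ≤ skorokhodReflection F t := by
  have := runningMin_le hF ht le_rfl
  have := neg_runningMin_le_skorokhodRegulator (F := F) (t := t)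
  unfold skorokhodReflection
  linarith

theorem le_of_skorokhodReflection_eq_zero (hF : Continuous F) (hw : skorokhodReflection F t = 0)
    (hu : 0 ≤ u) (hut : u ≤ t) : F t ≤ F u := by
  have := runningMin_le hF hu hut
  have := neg_runningMin_le_skorokhodRegulator (F := F) (t := t)
  unfold skorokhodReflection at hw
  linarith

theorem exists_skorokhodReflection_eq_zero_of_lt (hF : Continuous F) (hs : 0 ≤ s)
    (hlt : skorokhodRegulator F s < skorokhodRegulator F t) :
    ∃ u ∈ Ioc s t, skorokhodReflection F u = 0 ∧
      skorokhodRegulator F u = skorokhodRegulator F t := by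
  have hst : s < t := lt_of_not_ge fun h => hlt.not_ge (skorokhodRegulator_monotone hF h)
  obtain ⟨u, ⟨hu0, hut⟩, hFu⟩ := exists_eq_runningMin hF t
  rw [max_eq_right (hs.trans hst.le)] at hut
  have hℓt : skorokhodRegulator F t = -F u := by
    have hpos := skorokhodRegulator_nonneg.trans_lt hlt
    rw [skorokhodRegulator, ← hFu] at hpos ⊢
    exact max_eq_right ((lt_max_iff.1 hpos).resolve_left (lt_irrefl 0)).le
  have hsu : s < u := lt_of_not_ge fun hus => by
    have := runningMin_le hF hu0 hus
    have := neg_runningMin_le_skorokhodRegulator (F := F) (t := s)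
    linarith
  have hℓu : skorokhodRegulator F u = skorokhodRegulator F t := by
    have := runningMin_le hF hu0 le_rfl
    have := neg_runningMin_le_skorokhodRegulator (F := F) (t := u)
    exact le_antisymm (skorokhodRegulator_monotone hF hut) (by linarith)
  refine ⟨u, ⟨hsu, hut⟩, ?_, hℓu⟩
  rw [skorokhodReflection, hℓu, hℓt, add_neg_cancel]

theorem skorokhodRegulator_eq_of_forall_pos (hF : Continuous F) (hs : 0 ≤ s) (hst : s ≤ t)
    (hpos : ∀ u ∈ Ioc s t, 0 < skorokhodReflection F u) :
    skorokhodRegulator F t = skorokhodRegulator F s := by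
  refine (skorokhodRegulator_monotone hF hst).eq_or_lt.elim Eq.symm fun hlt => ?_
  obtain ⟨u, hu, hwu, -⟩ := exists_skorokhodReflection_eq_zero_of_lt hF hs hlt
  exact absurd hwu (hpos u hu).ne'

theorem skorokhodRegulator_eventuallyEq (hF : Continuous F) (ht : 0 < t)
    (hw : ∀ᶠ u in 𝓝 t, 0 < skorokhodReflection F u) :
    skorokhodRegulator F =ᶠ[𝓝 t] fun _ => skorokhodRegulator F t := by
  obtain ⟨a, b, hab, hsub⟩ := mem_nhds_iff_exists_Ioo_subset.1 (hw.and (Ioi_mem_nhds ht))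
  filter_upwards [Ioo_mem_nhds hab.1 hab.2] with s hs
  have hpos : ∀ u ∈ uIcc s t, 0 < skorokhodReflection F u ∧ 0 < u := fun u hu =>
    hsub (ordConnected_Ioo.uIcc_subset hs hab hu)
  rcases le_total s t with h | h
  · exact (skorokhodRegulator_eq_of_forall_pos hF (hpos s left_mem_uIcc).2.le h fun u hu =>
      (hpos u (Icc_subset_uIcc (Ioc_subset_Icc_self hu))).1).symm
  · exact skorokhodRegulator_eq_of_forall_pos hF ht.le h fun u hu =>
      (hpos u (Icc_subset_uIcc' (Ioc_subset_Icc_self hu))).1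

variable {K : NNReal}

theorem abs_skorokhodReflection_sub_le (hF : LipschitzWith K F) {a b : ℝ} (ha : 0 ≤ a)
    (hab : a ≤ b) : |skorokhodReflection F b - skorokhodReflection F a| ≤ K * (b - a) := by
  have hlip : ∀ {x y : ℝ}, x ≤ y → |F y - F x| ≤ K * (y - x) := fun {x y} hxy => by
    simpa [Real.dist_eq, abs_of_nonneg (sub_nonneg.2 hxy)] using hF.dist_le_mul y x
  have hFba := abs_le.1 (hlip hab)
  have hℓ := skorokhodRegulator_monotone hF.continuous hab
  refine abs_le.2 ⟨by unfold skorokhodReflection; linarith, ?_⟩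
  rcases hℓ.eq_or_lt with heq | hlt
  · unfold skorokhodReflection; linarith
  obtain ⟨u, hu, hwu, hℓu⟩ := exists_skorokhodReflection_eq_zero_of_lt hF.continuous ha hlt
  have hFbu := abs_le.1 (hlip hu.2)
  have hwa := skorokhodReflection_nonneg hF.continuous ha
  have : K * (b - u) ≤ K * (b - a) := mul_le_mul_of_nonneg_left (by linarith [hu.1]) K.coe_nonneg
  unfold skorokhodReflection at hwu hwa ⊢
  linarith

theorem lipschitzOnWith_skorokhodReflection (hF : LipschitzWith K F) :
    LipschitzOnWith K (skorokhodReflection F) (Ici 0) := by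
  refine LipschitzOnWith.of_dist_le_mul fun x hx y hy => ?_
  rw [Real.dist_eq, Real.dist_eq]
  rcases le_total x y with h | h
  · rw [abs_sub_comm, abs_sub_comm x, abs_of_nonneg (sub_nonneg.2 h)]
    exact abs_skorokhodReflection_sub_le hF hx h
  · rw [abs_of_nonneg (sub_nonneg.2 h)]
    exact abs_skorokhodReflection_sub_le hF hy h

theorem hasDerivAt_skorokhodReflection_of_pos {d : ℝ} (hF : LipschitzWith K F)
    (hd : HasDerivAt F d t) (ht : 0 < t) (hw : 0 < skorokhodReflection F t) :
    HasDerivAt (skorokhodReflection F) d t := by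
  have hcont : ContinuousAt (skorokhodReflection F) t :=
    (lipschitzOnWith_skorokhodReflection hF).continuousOn.continuousAt (Ici_mem_nhds ht)
  have hℓ := skorokhodRegulator_eventuallyEq hF.continuous ht
    (continuousAt_const.eventually_lt hcont hw)
  exact (hd.add_const _).congr_of_eventuallyEq (hℓ.mono fun u hu => by rw [skorokhodReflection, hu])

theorem hasDerivAt_skorokhodReflection_of_eq_zero (hF : Continuous F) (ht : 0 < t)
    (hdiff : DifferentiableAt ℝ (skorokhodReflection F) t) (hw : skorokhodReflection F t = 0) :
    HasDerivAt (skorokhodReflection F) 0 t := by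
  have hmin : IsLocalMin (skorokhodReflection F) t := by
    filter_upwards [Ioi_mem_nhds ht] with u hu
    exact hw ▸ skorokhodReflection_nonneg hF (le_of_lt hu)
  exact hmin.hasDerivAt_eq_zero hdiff.hasDerivAt ▸ hdiff.hasDerivAt

end Skorokhod

theorem lipschitzWith_of_hasDerivAt_abs_le {F f : ℝ → ℝ} {C : ℝ} (hd : ∀ t, HasDerivAt F (f t) t)
    (hb : ∀ t, |f t| ≤ C) : LipschitzWith C.toNNReal F :=
  lipschitzWith_of_nnnorm_deriv_le (fun t => (hd t).differentiableAt) fun t =>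
    NNReal.le_toNNReal_of_coe_le ((hd t).deriv ▸ hb t)

theorem mem_psiGraph_zero {z : ℝ} (h0 : 0 ≤ z) (h1 : z ≤ 1) : z ∈ psiGraph 0 :=
  ⟨h0, h1, fun h => absurd h (lt_irrefl 0), fun h => absurd h (lt_irrefl 0)⟩

theorem one_mem_psiGraph {w : ℝ} (hw : 0 ≤ w) : 1 ∈ psiGraph w :=
  ⟨zero_le_one, le_rfl, fun h => absurd h hw.not_gt, fun _ => rfl⟩

noncomputable def psiSelection (w ρ : ℝ) : ℝ := if w = 0 then ρ else 1

theorem skorokhodReflection_solves_ode {F : ℝ → ℝ} {K : NNReal} {kd ρ t : ℝ} (hkd : 0 < kd)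
    (hρ : 0 ≤ ρ) (hF : LipschitzWith K F) (hF' : HasDerivAt F (kd * (ρ - 1)) t) (ht : 0 < t)
    (hdiff : DifferentiableAt ℝ (skorokhodReflection F) t) :
    psiSelection (skorokhodReflection F t) ρ ∈ psiGraph (skorokhodReflection F t) ∧
      HasDerivAt (skorokhodReflection F)
        (kd * (ρ - psiSelection (skorokhodReflection F t) ρ)) t := by
  by_cases hw : skorokhodReflection F t = 0
  · have hle := hF'.nonpos_of_isMinOn_Icc ht fun u hu =>
      le_of_skorokhodReflection_eq_zero hF.continuous hw hu.1 hu.2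
    simp only [psiSelection, hw, if_true, sub_self, mul_zero]
    exact ⟨mem_psiGraph_zero hρ (by nlinarith),
      hasDerivAt_skorokhodReflection_of_eq_zero hF.continuous ht hdiff hw⟩
  · simp only [psiSelection, hw, if_false]
    have hpos := (skorokhodReflection_nonneg hF.continuous ht.le).lt_of_ne' hw
    exact ⟨one_mem_psiGraph hpos.le, hasDerivAt_skorokhodReflection_of_pos hF hF' ht hpos⟩

theorem multivalued_ode_existence_general (T k kd w₀ : ℝ) (hT : 0 < T) (hkd : 0 < kd)
    (hw₀ : 0 ≤ w₀) (r : ℝ → ℝ) (hr : ContinuousOn r (Set.Icc 0 T))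
    (hrb : ∀ t ∈ Set.Icc (0 : ℝ) T, 0 ≤ r t ∧ r t ≤ k / 4) :
    ∃ w z : ℝ → ℝ,
      LipschitzOnWith (Real.toNNReal (kd * (1 + k / 4))) w (Set.Icc 0 T) ∧
      Measurable z ∧
      w 0 = w₀ ∧
      (∀ t ∈ Set.Icc (0 : ℝ) T, 0 ≤ w t) ∧
      (∀ᵐ t ∂(volume.restrict (Set.Ioo (0 : ℝ) T)),
        z t ∈ psiGraph (w t) ∧ HasDerivAt w (kd * (r t - z t)) t) := by
  set ρ : ℝ → ℝ := fun t => r (projIcc 0 T hT.le t)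
  have hρ : Continuous ρ :=
    hr.comp_continuous continuous_projIcc.subtype_val fun t => (projIcc 0 T hT.le t).2
  have hρb : ∀ t, 0 ≤ ρ t ∧ ρ t ≤ k / 4 := fun t => hrb _ (projIcc 0 T hT.le t).2
  set F : ℝ → ℝ := fun t => w₀ + ∫ s in (0 : ℝ)..t, kd * (ρ s - 1)
  have hF' : ∀ t, HasDerivAt F (kd * (ρ t - 1)) t := fun t =>
    (((hρ.sub continuous_const).const_mul kd).integral_hasStrictDerivAt 0 t).hasDerivAt.const_add w₀
  have hF : LipschitzWith (kd * (1 + k / 4)).toNNReal F := by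
    refine lipschitzWith_of_hasDerivAt_abs_le hF' fun t => ?_
    rw [abs_mul, abs_of_pos hkd]
    exact mul_le_mul_of_nonneg_left (abs_le.2 ⟨by linarith [hρb t], by linarith [hρb t]⟩) hkd.le
  set w := skorokhodReflection F
  have hw : LipschitzOnWith _ w (Icc 0 T) :=
    (lipschitzOnWith_skorokhodReflection hF).mono Icc_subset_Ici_self
  have hF0 : F 0 = w₀ := by simp [F]
  refine ⟨w, fun t => psiSelection (w t) (ρ t), hw,
    Measurable.ite (measurableSet_eq_fun (measurable_skorokhodReflection hF.continuous)
      measurable_const) hρ.measurable measurable_const,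
    (skorokhodReflection_zero (hF0 ▸ hw₀)).trans hF0,
    fun t ht => skorokhodReflection_nonneg hF.continuous ht.1, ?_⟩
  filter_upwards [(hw.mono Ioo_subset_Icc_self).ae_differentiableWithinAt measurableSet_Ioo,
    ae_restrict_mem measurableSet_Ioo] with t hdiff ht
  have hρt : ρ t = r t := by simp only [ρ, projIcc_of_mem hT.le (Ioo_subset_Icc_self ht)]
  exact hρt ▸ skorokhodReflection_solves_ode hkd (hρb t).1 hF (hF' t) ht.1
    (hdiff.differentiableAt (Ioo_mem_nhds ht.1 ht.2))

/-- Existence of a nonnegative solution of the multivalued precipitation–dissolution ODE: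
for `T, k, k_d > 0`, `w₀ ≥ 0` and continuous `r : [0,T] → ℝ` with `0 ≤ r ≤ k/4`, there exist
a Lipschitz function `w` (constant `k_d·(1 + k/4)`) and a measurable `z` with `w(0) = w₀`,
`w ≥ 0` on `[0,T]`, and for a.e. `t ∈ (0,T)`: `z(t) ∈ ψ(w(t))` and
`w'(t) = k_d·(r(t) − z(t))`. -/
theorem multivalued_ode_existence (T k kd w₀ : ℝ) (hT : 0 < T) (hk : 0 < k) (hkd : 0 < kd)
    (hw₀ : 0 ≤ w₀) (r : ℝ → ℝ) (hr : ContinuousOn r (Set.Icc 0 T))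
    (hrb : ∀ t ∈ Set.Icc (0 : ℝ) T, 0 ≤ r t ∧ r t ≤ k / 4) :
    ∃ w z : ℝ → ℝ,
      LipschitzOnWith (Real.toNNReal (kd * (1 + k / 4))) w (Set.Icc 0 T) ∧
      Measurable z ∧
      w 0 = w₀ ∧
      (∀ t ∈ Set.Icc (0 : ℝ) T, 0 ≤ w t) ∧
      (∀ᵐ t ∂(volume.restrict (Set.Ioo (0 : ℝ) T)),
        z t ∈ psiGraph (w t) ∧ HasDerivAt w (kd * (r t - z t)) t) :=
  multivalued_ode_existence_general T k kd w₀ hT hkd hw₀ r hr hrb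
end
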